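/- Let q be an odd prime power, v ≥ 1, n = 2^v, s odd, and t an integer with 1 ≤ ν_2(t) < v or ν_2(t)=0, satisfying qt ≡ t (mod 2^v) (i.e., v ≤ ν_2(q−1)+ν_2(t)), where ν_2 is the 2-adic valuation. Then there exists a μ_q-invariant subset P ⊆ Z/2^vZ with Z/2^vZ = P ⊔ ρ_{s,t}(P) if and only if ν_2(q^j − s) > ν_2(t) for all integers j ≥ 0. -/

import Mathlib

/-!
Write `t = 2^e u` with `u` odd, so `e < v`. If `2^(e+1) ∤ q^j - s` for some `j`, then
`gcd(q^j - s, 2^v)` divides `2^e`, hence `s t`, so `μ_q^j` and `ρ_{s,t}` agree at some `x`;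
as `μ_q` preserves `P` while `ρ_{s,t}` swaps `P` and its complement, `x ∈ P ↔ x ∉ P`.
Conversely, if `q ≡ s ≡ 1 (mod 2^(e+1))` then modulo `2^(e+1)` the map `μ_q` is the identity
and `ρ_{s,t}` is translation by `2^e`, so `P = {i | i mod 2^(e+1) < 2^e}` is a splitting.
-/

/-- The 2-adic valuation of an integer, valued in `ℕ∞` (so that `ν₂(0) = ⊤`). -/
noncomputable def nu2 (m : ℤ) : ℕ∞ := emultiplicity 2 m

open Finset Function

theorem coe_lt_nu2_iff (e : ℕ) (x : ℤ) : (e : ℕ∞) < nu2 x ↔ 2 ^ (e + 1) ∣ x := by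
  rw [nu2, pow_dvd_iff_le_emultiplicity, Nat.cast_add, Nat.cast_one,
    ENat.add_one_le_iff (ENat.natCast_ne_top e)]

theorem nu2_two_pow_mul_of_odd (e : ℕ) {u : ℤ} (hu : Odd u) : nu2 (2 ^ e * u) = e := by
  refine emultiplicity_eq_coe.mpr ⟨dvd_mul_right _ _, fun h => ?_⟩
  rw [pow_succ, mul_dvd_mul_iff_left (pow_ne_zero e two_ne_zero)] at h
  exact Int.not_even_iff_odd.mpr hu (even_iff_two_dvd.mpr h)

theorem Int.exists_eq_two_pow_mul_odd {t : ℤ} (ht : t ≠ 0) :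
    ∃ (e : ℕ) (u : ℤ), t = 2 ^ e * u ∧ Odd u := by
  obtain ⟨u, htu, hu⟩ :=
    (Int.finiteMultiplicity_iff (a := 2)).mpr ⟨by norm_num, ht⟩ |>.exists_eq_pow_mul_and_not_dvd
  exact ⟨_, u, htu, Int.not_even_iff_odd.mp (mt even_iff_two_dvd.mp hu)⟩

theorem ZMod.isUnit_intCast_of_odd (v : ℕ) {m : ℤ} (hm : Odd m) : IsUnit (m : ZMod (2 ^ v)) :=
  (ZMod.coe_int_isUnit_iff_isCoprime m _).mpr
    (by push_cast; exact (Int.isCoprime_two_left.mpr hm).pow_left)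

theorem ZMod.exists_intCast_mul_eq {n : ℕ} {a c : ℤ} (h : (Int.gcd a n : ℤ) ∣ c) :
    ∃ x : ZMod n, (a : ZMod n) * x = c := by
  obtain ⟨k, rfl⟩ := h
  refine ⟨(a.gcdA n * k : ℤ), ?_⟩
  rw [Int.gcd_eq_gcd_ab]
  push_cast
  rw [ZMod.natCast_self]
  ring

theorem Int.gcd_prime_pow_dvd_of_not_dvd {p : ℕ} (hp : p.Prime) {x : ℤ} {e : ℕ}
    (hx : ¬ (p : ℤ) ^ (e + 1) ∣ x) (v : ℕ) :
    (Int.gcd x (p ^ v : ℕ) : ℤ) ∣ (p : ℤ) ^ e := by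
  obtain ⟨k, -, hk⟩ := (Nat.dvd_prime_pow hp).mp (Int.gcd_dvd_natAbs_right x (p ^ v : ℕ))
  have hkx : (p : ℤ) ^ k ∣ x := by exact_mod_cast hk ▸ Int.gcd_dvd_left x (p ^ v : ℕ)
  have hke : k ≤ e := by
    by_contra hke
    exact hx ((pow_dvd_pow _ (by omega)).trans hkx)
  rw [hk]
  exact_mod_cast pow_dvd_pow p hke

theorem exists_intCast_mul_eq_mul_add {v e : ℕ} {a b τ : ℤ} (hτ : 2 ^ e ∣ τ)
    (hab : ¬ 2 ^ (e + 1) ∣ a - b) :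
    ∃ x : ZMod (2 ^ v), (a : ZMod (2 ^ v)) * x = b * (x + τ) := by
  have hgcd := Int.gcd_prime_pow_dvd_of_not_dvd Nat.prime_two (by exact_mod_cast hab) v
  obtain ⟨x, hx⟩ := ZMod.exists_intCast_mul_eq (c := b * τ)
    (dvd_mul_of_dvd_right (by exact_mod_cast hgcd.trans hτ) b)
  refine ⟨x, ?_⟩
  push_cast at hx
  linear_combination hx

theorem Finset.iterate_ne_of_image_eq_compl {α : Type*} [Fintype α] [DecidableEq α]
    {f ρ : α → α} (hf : Injective f) (hρ : Injective ρ) {P : Finset α}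
    (hfP : P.image f = P) (hρP : P.image ρ = Pᶜ) (j : ℕ) (x : α) : f^[j] x ≠ ρ x := by
  have hf_mem : ∀ y, f y ∈ P ↔ y ∈ P := fun y => by
    conv_lhs => rw [← hfP]
    exact hf.mem_finset_image
  have hfj_mem : f^[j] x ∈ P ↔ x ∈ P := by
    induction j with
    | zero => rfl
    | succ j ih => rw [iterate_succ_apply', hf_mem, ih]
  have hρ_mem : ρ x ∉ P ↔ x ∈ P := by
    rw [← mem_compl, ← hρP]
    exact hρ.mem_finset_image
  intro h
  rw [h] at hfj_mem
  exact iff_not_self (hfj_mem.trans hρ_mem.symm)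

theorem Finset.image_filter_univ_eq {α : Type*} [Fintype α] [DecidableEq α] {g : α → α}
    (hg : Surjective g) {p r : α → Prop} [DecidablePred p] [DecidablePred r]
    (h : ∀ i, r (g i) ↔ p i) : (univ.filter p).image g = univ.filter r := by
  conv_rhs => rw [← image_univ_of_surjective hg, filter_image]
  simp only [h]

theorem ZMod.val_add_two_pow_lt_iff (e : ℕ) (x : ZMod (2 ^ (e + 1))) :
    (x + 2 ^ e).val < 2 ^ e ↔ 2 ^ e ≤ x.val := by
  have h2e : 2 ^ (e + 1) = 2 * 2 ^ e := by ring
  have hx := ZMod.val_lt x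
  have h2e_cast : (2 : ZMod (2 ^ (e + 1))) ^ e = ((2 ^ e : ℕ) : ZMod _) := by norm_cast
  rw [ZMod.val_add, h2e_cast, ZMod.val_natCast_of_lt (by omega), Nat.add_mod_eq_ite,
    Nat.mod_eq_of_lt hx, Nat.mod_eq_of_lt (a := 2 ^ e) (by omega)]
  split_ifs <;> omega

theorem exists_splitting_of_modEq_one {v e : ℕ} (hev : e < v) {a b τ : ℤ}
    (ha : a ≡ 1 [ZMOD 2 ^ (e + 1)]) (hb : b ≡ 1 [ZMOD 2 ^ (e + 1)])
    (hτ : τ ≡ 2 ^ e [ZMOD 2 ^ (e + 1)]) :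
    ∃ P : Finset (ZMod (2 ^ v)), P.image (fun i => (a : ZMod (2 ^ v)) * i) = P ∧
      P.image (fun i => (b : ZMod (2 ^ v)) * (i + τ)) = Pᶜ := by
  have hodd : ∀ {m : ℤ}, m ≡ 1 [ZMOD 2 ^ (e + 1)] → Odd m := fun hm =>
    Int.odd_iff.mpr (hm.of_dvd (dvd_pow_self 2 e.succ_ne_zero))
  set c := ZMod.castHom (pow_dvd_pow 2 hev : 2 ^ (e + 1) ∣ 2 ^ v) (ZMod (2 ^ (e + 1)))
  have hc : ∀ {m m' : ℤ}, m ≡ m' [ZMOD 2 ^ (e + 1)] → c m = m' := fun hm => by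
    rw [map_intCast]
    exact (ZMod.intCast_eq_intCast_iff _ _ _).mpr (by exact_mod_cast hm)
  have ha_surj : Surjective fun i : ZMod (2 ^ v) => (a : ZMod (2 ^ v)) * i :=
    Finite.surjective_of_injective (ZMod.isUnit_intCast_of_odd v (hodd ha)).mul_right_injective
  have hρ_surj : Surjective fun i : ZMod (2 ^ v) => (b : ZMod (2 ^ v)) * (i + τ) :=
    (Finite.surjective_of_injective
      (ZMod.isUnit_intCast_of_odd v (hodd hb)).mul_right_injective).comp
      (add_right_surjective _)
  refine ⟨univ.filter fun i => (c i).val < 2 ^ e, image_filter_univ_eq ha_surj fun i => ?_, ?_⟩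
  · rw [map_mul, hc ha, Int.cast_one, one_mul]
  · rw [compl_filter]
    refine image_filter_univ_eq hρ_surj fun i => ?_
    rw [map_mul, map_add, hc hb, hc hτ, Int.cast_one, one_mul, Int.cast_pow, Int.cast_two,
      ZMod.val_add_two_pow_lt_iff, not_le]

theorem stmt11 (q : ℕ) (hodd : Odd q)
    (v : ℕ) (s t : ℤ) (hs : Odd s)
    (ht0 : ¬ ((2 : ℤ) ^ v ∣ t)) :
    (∃ P : Finset (ZMod (2 ^ v)),
        P.image (fun i => (q : ZMod (2 ^ v)) * i) = P ∧
        P.image (fun i => (s : ZMod (2 ^ v)) * (i + (t : ZMod (2 ^ v)))) = Pᶜ) ↔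
    (∀ j : ℕ, nu2 ((q : ℤ) ^ j - s) > nu2 t) := by
  obtain ⟨e, u, rfl, hu⟩ :=
    Int.exists_eq_two_pow_mul_odd (t := t) fun ht => ht0 (ht ▸ dvd_zero _)
  have hev : e < v := by
    by_contra hve
    exact ht0 (dvd_mul_of_dvd_left (pow_dvd_pow 2 (not_lt.mp hve)) u)
  simp only [gt_iff_lt, nu2_two_pow_mul_of_odd e hu, coe_lt_nu2_iff]
  constructor
  · rintro ⟨P, hqP, hρP⟩ j
    by_contra hj
    obtain ⟨x, hx⟩ := exists_intCast_mul_eq_mul_add (v := v) (dvd_mul_right _ u) hj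
    have hqU : IsUnit (q : ZMod (2 ^ v)) := by
      exact_mod_cast ZMod.isUnit_intCast_of_odd v (Int.odd_coe_nat q |>.mpr hodd)
    refine iterate_ne_of_image_eq_compl hqU.mul_right_injective
      ((ZMod.isUnit_intCast_of_odd v hs).mul_right_injective.comp (add_left_injective _))
      hqP hρP j x ?_
    rw [mul_left_iterate]
    exact_mod_cast hx
  · intro h
    have hs1 : s ≡ 1 [ZMOD 2 ^ (e + 1)] := Int.modEq_iff_dvd.mpr (by simpa using h 0)
    have hsq : s ≡ q [ZMOD 2 ^ (e + 1)] := Int.modEq_iff_dvd.mpr (by simpa using h 1)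
    have ht : 2 ^ e * u ≡ 2 ^ e [ZMOD 2 ^ (e + 1)] := by
      obtain ⟨k, rfl⟩ := hu
      exact Int.modEq_iff_dvd.mpr ⟨-k, by ring⟩
    simpa using exists_splitting_of_modEq_one hev (hsq.symm.trans hs1) hs1 ht
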